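/- Given a singular value decomposition ((y_1, …, y_n), (x_1, …, x_m)) for a two-term Floer-type complex (C_1 →∂ C_0) with r = rank ∂, the generalized boundary depths are given by β_k(∂) = ℓ(y_k) − ℓ(x_k) for 1 ≤ k ≤ r, and β_k(∂) = 0 for k > r. In particular, the quantities ℓ(y_k) − ℓ(x_k) are independent of the choice of singular value decomposition. -/

import Mathlib

/-!
Formalization setup following Usher–Zhang, "Persistent homology and Floer–Novikov theory".

We fix an additive subgroup `Γ ≤ ℝ` and abstract the Novikov field `Λ = Λ^{K,Γ}` as a field
`Λ` equipped with a valuation `ν : Λ → ℝ ∪ {∞}` (encoded in `EReal`, with `ν x = ⊤ ↔ x = 0`)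
satisfying (V1),(V2),(V3), whose values on nonzero elements lie in (and fill out) `Γ`.

Filtration functions `ℓ : C → ℝ ∪ {-∞}` are encoded as `EReal`-valued functions which never
take the value `⊤`, with `ℓ x = ⊥ ↔ x = 0`.
-/

noncomputable section

/-- The Novikov field `Λ^{K,Γ}` together with its valuation `ν(Σ a_g T^g) = min {g : a_g ≠ 0}`:
a field `Λ` with a function `ν : Λ → ℝ ∪ {∞}` such that (V1) `ν x = ∞ ↔ x = 0`,
(V2) `ν (xy) = ν x + ν y`, (V3) `ν (x+y) ≥ min (ν x) (ν y)`, and the values of `ν` on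
nonzero elements are exactly the elements of `Γ`. -/
structure NovikovStructure (Γ : AddSubgroup ℝ) (Λ : Type*) [Field Λ] where
  ν : Λ → EReal
  ν_eq_top_iff : ∀ x : Λ, ν x = ⊤ ↔ x = 0
  ν_mul : ∀ x y : Λ, ν (x * y) = ν x + ν y
  min_le_ν_add : ∀ x y : Λ, min (ν x) (ν y) ≤ ν (x + y)
  ν_mem : ∀ x : Λ, x ≠ 0 → ∃ g : Γ, ν x = ((g : ℝ) : EReal)
  ν_surj : ∀ g : Γ, ∃ x : Λ, ν x = ((g : ℝ) : EReal)

/-- `(C, ℓ)` is a non-Archimedean normed vector space over `Λ` (Definition 2.2):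
(F1) `ℓ x = -∞ ↔ x = 0`; (F2) `ℓ (λ • x) = ℓ x - ν λ`; (F3) `ℓ (x+y) ≤ max (ℓ x) (ℓ y)`. -/
structure IsNonArchNorm {Γ : AddSubgroup ℝ} {Λ : Type*} [Field Λ] (NS : NovikovStructure Γ Λ)
    {C : Type*} [AddCommGroup C] [Module Λ C] (ℓ : C → EReal) : Prop where
  eq_bot_iff : ∀ x : C, ℓ x = ⊥ ↔ x = 0
  ne_top : ∀ x : C, ℓ x ≠ ⊤
  smul_eq : ∀ (a : Λ) (x : C), ℓ (a • x) = ℓ x - NS.ν a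
  add_le : ∀ x y : C, ℓ (x + y) ≤ max (ℓ x) (ℓ y)

/-- A finite ordered family `(w i)` in `(C, ℓ)` is orthogonal:
`ℓ (∑ λᵢ • wᵢ) = maxᵢ ℓ (λᵢ • wᵢ)` for all coefficients `λᵢ ∈ Λ` (Definition 2.8). -/
def IsOrthFamily (Λ : Type*) [Field Λ] {C : Type*} [AddCommGroup C] [Module Λ C]
    (ℓ : C → EReal) {ι : Type*} [Fintype ι] (w : ι → C) : Prop :=
  ∀ a : ι → Λ, ℓ (∑ i, a i • w i) = ⨆ i, ℓ (a i • w i)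

/-- Two subspaces `V, W` of `(C, ℓ)` are orthogonal if
`ℓ (v + w) = max (ℓ v) (ℓ w)` for all `v ∈ V`, `w ∈ W` (Definition 2.8). -/
def AreOrthogonal {Λ : Type*} [Field Λ] {C : Type*} [AddCommGroup C] [Module Λ C]
    (ℓ : C → EReal) (V W : Submodule Λ C) : Prop :=
  ∀ v ∈ V, ∀ w ∈ W, ℓ (v + w) = max (ℓ v) (ℓ w)

/-- An orthogonalizable `Λ`-space: a finite-dimensional non-Archimedean normed `Λ`-vector
space admitting an orthogonal (finite) basis. -/
def IsOrthogonalizable {Γ : AddSubgroup ℝ} {Λ : Type*} [Field Λ] (NS : NovikovStructure Γ Λ)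
    {C : Type*} [AddCommGroup C] [Module Λ C] (ℓ : C → EReal) : Prop :=
  IsNonArchNorm NS ℓ ∧ ∃ (n : ℕ) (b : Module.Basis (Fin n) Λ C), IsOrthFamily Λ ℓ ⇑b

/-- A singular value decomposition (Definition 3.1) of a linear map `A : C → D` between
orthogonalizable `Λ`-spaces: orthogonal ordered bases `(y₁,…,yₙ)` of `C` and `(x₁,…,xₘ)`
of `D` such that `(y_{r+1},…,yₙ)` is an orthogonal ordered basis of `ker A`,
`(x₁,…,x_r)` is an orthogonal ordered basis of `Im A`, `A yᵢ = xᵢ` for `i ≤ r`, and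
`ℓ_C(y₁) - ℓ_D(x₁) ≥ … ≥ ℓ_C(y_r) - ℓ_D(x_r)`; here `r` is the rank of `A`. -/
def IsSVD {Λ : Type*} [Field Λ] {C D : Type*} [AddCommGroup C] [Module Λ C]
    [AddCommGroup D] [Module Λ D] (ℓC : C → EReal) (ℓD : D → EReal) (A : C →ₗ[Λ] D)
    {r n m : ℕ} (hrn : r ≤ n) (hrm : r ≤ m)
    (y : Module.Basis (Fin n) Λ C) (x : Module.Basis (Fin m) Λ D) : Prop :=
  IsOrthFamily Λ ℓC ⇑y ∧
  IsOrthFamily Λ ℓD ⇑x ∧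
  (∀ i : Fin r, A (y (Fin.castLE hrn i)) = x (Fin.castLE hrm i)) ∧
  (∀ i : Fin n, r ≤ (i : ℕ) → A (y i) = 0) ∧
  LinearMap.ker A = Submodule.span Λ (⇑y '' {i : Fin n | r ≤ (i : ℕ)}) ∧
  LinearMap.range A = Submodule.span Λ (⇑x '' {i : Fin m | (i : ℕ) < r}) ∧
  (∀ i j : Fin r, i ≤ j →
    ℓC (y (Fin.castLE hrn j)) - ℓD (x (Fin.castLE hrm j)) ≤
      ℓC (y (Fin.castLE hrn i)) - ℓD (x (Fin.castLE hrm i)))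

/-- An element `x ∈ C₀` is `δ`-robust (Definition 4.5) if every `y` with `∂ y = x` has
`ℓ(y) > ℓ(x) + δ`. -/
def IsRobustElem {Λ : Type*} [Field Λ] {C1 C0 : Type*} [AddCommGroup C1] [Module Λ C1]
    [AddCommGroup C0] [Module Λ C0] (ℓ1 : C1 → EReal) (ℓ0 : C0 → EReal)
    (bd : C1 →ₗ[Λ] C0) (δ : ℝ) (x : C0) : Prop :=
  ∀ y : C1, bd y = x → ℓ0 x + (δ : EReal) < ℓ1 y

/-- A subspace `V ≤ C₀` is `δ`-robust if every nonzero element of `V` is `δ`-robust. -/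
def IsRobustSubspace {Λ : Type*} [Field Λ] {C1 C0 : Type*} [AddCommGroup C1] [Module Λ C1]
    [AddCommGroup C0] [Module Λ C0] (ℓ1 : C1 → EReal) (ℓ0 : C0 → EReal)
    (bd : C1 →ₗ[Λ] C0) (δ : ℝ) (V : Submodule Λ C0) : Prop :=
  ∀ x ∈ V, x ≠ 0 → IsRobustElem ℓ1 ℓ0 bd δ x

/-- The generalized boundary depth `β_k(∂)` (Definition 4.6): the supremum of `{0}` together
with all `δ ≥ 0` admitting a `δ`-robust `k`-dimensional subspace of `Im ∂`. -/
noncomputable def genBoundaryDepth {Λ : Type*} [Field Λ] {C1 C0 : Type*}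
    [AddCommGroup C1] [Module Λ C1] [AddCommGroup C0] [Module Λ C0]
    (ℓ1 : C1 → EReal) (ℓ0 : C0 → EReal) (bd : C1 →ₗ[Λ] C0) (k : ℕ) : EReal :=
  sSup (insert (0 : EReal)
    {e : EReal | ∃ δ : ℝ, 0 ≤ δ ∧ e = (δ : EReal) ∧
      ∃ V : Submodule Λ C0, V ≤ LinearMap.range bd ∧
        Module.finrank Λ ↥V = k ∧ IsRobustSubspace ℓ1 ℓ0 bd δ V})

/-!
Write `d_k = ℓ(y_k) - ℓ(x_k)` for `k ≤ r`; these gaps are nonnegative and non-increasing.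
If `δ < d_k`, the span of `x_1, …, x_k` is `δ`-robust: a nonzero `v` in it has
`ℓ(v) = ℓ(λ_j x_j)` for some `j ≤ k`, and any `w` with `∂w = v` has `y_j`-coordinate `λ_j`,
so `ℓ(w) ≥ ℓ(λ_j y_j) = ℓ(λ_j x_j) + d_j ≥ ℓ(v) + d_k`. Conversely, a `k`-dimensional subspace
of `Im ∂` meets the span of `x_k, …, x_r` in some `v = ∑ λ_j x_j ≠ 0`, whose primitive
`∑ λ_j y_j` has filtration at most `ℓ(v) + d_k`; so no `k`-dimensional subspace is
`d_k`-robust. For `k > r` there is no `k`-dimensional subspace of `Im ∂` at all.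
-/

open Module

section NonArchNorm

variable {Γ : AddSubgroup ℝ} {Λ : Type*} [Field Λ] {NS : NovikovStructure Γ Λ}
  {C : Type*} [AddCommGroup C] [Module Λ C] {ℓ : C → EReal}

namespace IsNonArchNorm

theorem map_zero (hℓ : IsNonArchNorm NS ℓ) : ℓ 0 = ⊥ :=
  (hℓ.eq_bot_iff 0).2 rfl

theorem coe_toReal (hℓ : IsNonArchNorm NS ℓ) {v : C} (hv : v ≠ 0) :
    ((ℓ v).toReal : EReal) = ℓ v :=
  EReal.coe_toReal (hℓ.ne_top v) fun h => hv ((hℓ.eq_bot_iff v).1 h)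

theorem sum_le (hℓ : IsNonArchNorm NS ℓ) {ι : Type*} (s : Finset ι) (f : ι → C) {c : EReal}
    (h : ∀ i ∈ s, ℓ (f i) ≤ c) : ℓ (∑ i ∈ s, f i) ≤ c :=
  Finset.sum_induction f (fun v => ℓ v ≤ c)
    (fun _ _ ha hb => (hℓ.add_le _ _).trans (max_le ha hb)) (hℓ.map_zero ▸ bot_le) h

theorem apply_smul_eq_add_sub {C' : Type*} [AddCommGroup C'] [Module Λ C'] {ℓ' : C' → EReal}
    (hℓ : IsNonArchNorm NS ℓ) (hℓ' : IsNonArchNorm NS ℓ') {u : C} {u' : C'} (hu : u ≠ 0)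
    (hu' : u' ≠ 0) (c : Λ) : ℓ (c • u) = ℓ' (c • u') + (ℓ u - ℓ' u') := by
  rcases eq_or_ne c 0 with rfl | hc
  · simp [hℓ.map_zero, hℓ'.map_zero]
  obtain ⟨g, hg⟩ := NS.ν_mem c hc
  rw [hℓ.smul_eq, hℓ'.smul_eq, hg, ← hℓ.coe_toReal hu, ← hℓ'.coe_toReal hu']
  norm_cast
  ring

end IsNonArchNorm

namespace IsOrthFamily

variable {ι : Type*} [Fintype ι] {b : Basis ι Λ C}

theorem apply_eq_iSup_repr (hb : IsOrthFamily Λ ℓ ⇑b) (v : C) :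
    ℓ v = ⨆ j, ℓ (b.repr v j • b j) := by
  conv_lhs => rw [← b.sum_repr v]
  exact hb _

theorem apply_repr_smul_le (hb : IsOrthFamily Λ ℓ ⇑b) (v : C) (j : ι) :
    ℓ (b.repr v j • b j) ≤ ℓ v :=
  hb.apply_eq_iSup_repr v ▸ le_iSup (fun j => ℓ (b.repr v j • b j)) j

theorem exists_apply_eq_repr_smul [Nonempty ι] (hb : IsOrthFamily Λ ℓ ⇑b) (v : C) :
    ∃ j, ℓ v = ℓ (b.repr v j • b j) := by
  obtain ⟨j, hj⟩ := exists_eq_ciSup_of_finite (f := fun j => ℓ (b.repr v j • b j))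
  exact ⟨j, hj ▸ hb.apply_eq_iSup_repr v⟩

end IsOrthFamily

end NonArchNorm

theorem Submodule.exists_mem_ne_zero_forall_dual_eq_zero {K V ι : Type*} [Field K]
    [AddCommGroup V] [Module K V] [Fintype ι] {W : Submodule K V} [FiniteDimensional K W]
    (f : ι → Dual K V) (h : Fintype.card ι < finrank K W) :
    ∃ v ∈ W, v ≠ 0 ∧ ∀ j, f j v = 0 := by
  have hker : LinearMap.ker ((LinearMap.pi f).comp W.subtype) ≠ ⊥ :=
    LinearMap.ker_ne_bot_of_finrank_lt (by rwa [Module.finrank_fintype_fun_eq_card])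
  obtain ⟨v, hv, hv0⟩ := Submodule.exists_mem_ne_zero_of_ne_bot hker
  exact ⟨v, v.2, by simpa using hv0, fun j => congr_fun (LinearMap.mem_ker.1 hv) j⟩

theorem Module.Basis.finrank_span_image_range {K V ι κ : Type*} [Field K] [AddCommGroup V]
    [Module K V] [Fintype κ] (b : Basis ι K V) {e : κ → ι} (he : Function.Injective e) :
    finrank K (Submodule.span K (b '' Set.range e)) = Fintype.card κ := by
  rw [← Set.range_comp, finrank_span_eq_card (b.linearIndependent.comp e he)]

section BoundaryDepth

variable {Λ : Type*} [Field Λ] {C1 C0 : Type*} [AddCommGroup C1] [Module Λ C1]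
  [AddCommGroup C0] [Module Λ C0] {ℓ1 : C1 → EReal} {ℓ0 : C0 → EReal} {bd : C1 →ₗ[Λ] C0}

theorem genBoundaryDepth_eq_of_forall_iff {k : ℕ} {g : EReal} (hg : 0 ≤ g)
    (h : ∀ δ : ℝ, 0 ≤ δ → ((∃ V : Submodule Λ C0, V ≤ LinearMap.range bd ∧
      finrank Λ V = k ∧ IsRobustSubspace ℓ1 ℓ0 bd δ V) ↔ (δ : EReal) < g)) :
    genBoundaryDepth ℓ1 ℓ0 bd k = g := by
  refine le_antisymm (sSup_le ?_) (le_of_forall_lt_imp_le_of_dense fun c hc => ?_)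
  · rintro _ (rfl | ⟨δ, hδ, rfl, hV⟩)
    exacts [hg, ((h δ hδ).1 hV).le]
  rcases le_or_gt c 0 with hc0 | hc0
  · exact hc0.trans (le_sSup (Set.mem_insert _ _))
  obtain ⟨δ, rfl⟩ : ∃ δ : ℝ, (δ : EReal) = c :=
    ⟨c.toReal, EReal.coe_toReal hc.ne_top (ne_bot_of_gt hc0)⟩
  have hδ : 0 ≤ δ := EReal.coe_nonneg.1 hc0.le
  exact le_sSup (Set.mem_insert_of_mem _ ⟨δ, hδ, rfl, (h δ hδ).2 hc⟩)

end BoundaryDepth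

namespace IsSVD

variable {Γ : AddSubgroup ℝ} {Λ : Type*} [Field Λ] {NS : NovikovStructure Γ Λ}
  {C1 C0 : Type*} [AddCommGroup C1] [Module Λ C1] [AddCommGroup C0] [Module Λ C0]
  {ℓ1 : C1 → EReal} {ℓ0 : C0 → EReal} {bd : C1 →ₗ[Λ] C0} {r n m : ℕ} {hrn : r ≤ n}
  {hrm : r ≤ m} {y : Basis (Fin n) Λ C1} {x : Basis (Fin m) Λ C0}

theorem repr_map_castLE (h : IsSVD ℓ1 ℓ0 bd hrn hrm y x) (w : C1) (j : Fin r) :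
    x.repr (bd w) (j.castLE hrm) = y.repr w (j.castLE hrn) := by
  obtain ⟨-, -, hyx, hy0, -⟩ := h
  suffices (x.coord (j.castLE hrm)).comp bd = y.coord (j.castLE hrn) from
    LinearMap.congr_fun this w
  refine y.ext fun k => ?_
  rcases lt_or_ge (k : ℕ) r with hk | hk
  · obtain ⟨k, rfl⟩ : ∃ k' : Fin r, k'.castLE hrn = k := ⟨⟨k, hk⟩, rfl⟩
    simp [hyx, Finsupp.single_apply]
  · have hjk : j.castLE hrn ≠ k := Fin.ne_of_val_ne (by simp; omega)
    simp [hy0 k hk, hjk]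

theorem map_eq_sum (h : IsSVD ℓ1 ℓ0 bd hrn hrm y x) (w : C1) :
    bd w = ∑ j : Fin r, y.repr w (j.castLE hrn) • x (j.castLE hrm) := by
  obtain ⟨-, -, hyx, hy0, -⟩ := h
  conv_lhs => rw [← y.sum_repr w]
  simp only [map_sum, map_smul]
  refine (Fintype.sum_of_injective _ (Fin.castLE_injective hrn) _ _ (fun k hk => ?_)
    fun j => by rw [hyx]).symm
  rw [hy0 k (not_lt.1 fun hkr => hk ⟨⟨k, hkr⟩, rfl⟩), smul_zero]

theorem eq_sum_of_mem_range (h : IsSVD ℓ1 ℓ0 bd hrn hrm y x) {v : C0}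
    (hv : v ∈ LinearMap.range bd) :
    v = ∑ j : Fin r, x.repr v (j.castLE hrm) • x (j.castLE hrm) := by
  obtain ⟨w, rfl⟩ := hv
  simp only [h.repr_map_castLE]
  exact h.map_eq_sum w

theorem finrank_range_le (h : IsSVD ℓ1 ℓ0 bd hrn hrm y x) :
    finrank Λ (LinearMap.range bd) ≤ r := by
  have := Module.Finite.of_basis x
  refine (Submodule.finrank_mono ?_).trans
    ((finrank_range_le_card fun j : Fin r => x (j.castLE hrm)).trans (Fintype.card_fin r).le)
  rintro _ ⟨w, rfl⟩
  rw [h.map_eq_sum w]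
  exact Submodule.sum_mem _ fun j _ => Submodule.smul_mem _ _ (Submodule.subset_span ⟨j, rfl⟩)

theorem gap_nonneg (h : IsSVD ℓ1 ℓ0 bd hrn hrm y x) (hℓ1 : IsNonArchNorm NS ℓ1)
    (hℓ0 : IsNonArchNorm NS ℓ0) (hbd : ∀ z : C1, ℓ0 (bd z) ≤ ℓ1 z) (i : Fin r) :
    0 ≤ ℓ1 (y (i.castLE hrn)) - ℓ0 (x (i.castLE hrm)) := by
  obtain ⟨-, -, hyx, -⟩ := h
  refine (EReal.sub_nonneg (.inl (hℓ1.ne_top _)) (.inr ?_)).2 (hyx i ▸ hbd _)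
  exact fun h0 => x.ne_zero _ ((hℓ0.eq_bot_iff _).1 h0)

theorem lt_gap_of_isRobustSubspace (h : IsSVD ℓ1 ℓ0 bd hrn hrm y x)
    (hℓ1 : IsNonArchNorm NS ℓ1) (hℓ0 : IsNonArchNorm NS ℓ0) {i : Fin r} {δ : ℝ}
    {V : Submodule Λ C0} (hV : V ≤ LinearMap.range bd) (hrank : finrank Λ V = i + 1)
    (hrob : IsRobustSubspace ℓ1 ℓ0 bd δ V) :
    (δ : EReal) < ℓ1 (y (i.castLE hrn)) - ℓ0 (x (i.castLE hrm)) := by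
  have : FiniteDimensional Λ V := Module.finite_of_finrank_pos (by omega)
  obtain ⟨v, hvV, hv0, hvi⟩ := Submodule.exists_mem_ne_zero_forall_dual_eq_zero (W := V)
    (fun j : Fin i => x.coord (j.castLE (i.2.le.trans hrm))) (by simp [hrank])
  have hv := h.eq_sum_of_mem_range (hV hvV)
  obtain ⟨-, hx, hyx, -, -, -, hmono⟩ := h
  set c : Fin r → Λ := fun j => x.repr v (j.castLE hrm)
  set w := ∑ j, c j • y (j.castLE hrn)
  have hw : bd w = v := by
    simp only [w, map_sum, map_smul, hyx]
    exact hv.symm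
  have hlw : ℓ1 w ≤ ℓ0 v + (ℓ1 (y (i.castLE hrn)) - ℓ0 (x (i.castLE hrm))) := by
    refine hℓ1.sum_le _ _ fun j _ => ?_
    rw [hℓ1.apply_smul_eq_add_sub hℓ0 (y.ne_zero _) (x.ne_zero (j.castLE hrm))]
    rcases lt_or_ge j i with hj | hj
    · simp [c, show c j = 0 from hvi ⟨j, hj⟩, hℓ0.map_zero]
    · exact add_le_add (hx.apply_repr_smul_le v _) (hmono i j hj)
  by_contra! hδ
  exact (hrob v hvV hv0 w hw).not_ge (hlw.trans (add_le_add_right hδ _))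

theorem exists_isRobustSubspace_of_lt_gap (h : IsSVD ℓ1 ℓ0 bd hrn hrm y x)
    (hℓ1 : IsNonArchNorm NS ℓ1) (hℓ0 : IsNonArchNorm NS ℓ0) {i : Fin r} {δ : ℝ}
    (hδ : (δ : EReal) < ℓ1 (y (i.castLE hrn)) - ℓ0 (x (i.castLE hrm))) :
    ∃ V : Submodule Λ C0, V ≤ LinearMap.range bd ∧ finrank Λ V = i + 1 ∧
      IsRobustSubspace ℓ1 ℓ0 bd δ V := by
  have hrepr := h.repr_map_castLE
  obtain ⟨hy, hx, hyx, -, -, -, hmono⟩ := h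
  refine ⟨Submodule.span Λ (x '' Set.range fun k : Fin (i + 1) => (k.castLE i.2).castLE hrm),
    ?_, ?_, fun v hv hv0 w hw => ?_⟩
  · rw [Submodule.span_le]
    rintro _ ⟨_, ⟨k, rfl⟩, rfl⟩
    exact ⟨_, hyx _⟩
  · exact (x.finrank_span_image_range
      ((Fin.castLE_injective _).comp (Fin.castLE_injective _))).trans (Fintype.card_fin _)
  have : Nonempty (Fin m) := ⟨i.castLE hrm⟩
  obtain ⟨j₀, hj₀⟩ := hx.exists_apply_eq_repr_smul v
  have hcj₀ : x.repr v j₀ ≠ 0 := fun hc =>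
    hv0 ((hℓ0.eq_bot_iff v).1 (by rw [hj₀, hc, zero_smul, hℓ0.map_zero]))
  obtain ⟨k, rfl⟩ := x.mem_span_image.1 hv (Finsupp.mem_support_iff.2 hcj₀)
  set j : Fin r := k.castLE i.2
  calc ℓ0 v + δ < ℓ0 v + (ℓ1 (y (i.castLE hrn)) - ℓ0 (x (i.castLE hrm))) := by
        rw [← hℓ0.coe_toReal hv0]
        exact EReal.add_lt_add_left_coe hδ _
    _ ≤ ℓ0 v + (ℓ1 (y (j.castLE hrn)) - ℓ0 (x (j.castLE hrm))) :=
        add_le_add_right (hmono j i (Nat.lt_succ_iff.1 k.2)) _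
    _ = ℓ1 (y.repr w (j.castLE hrn) • y (j.castLE hrn)) := by
        rw [hℓ1.apply_smul_eq_add_sub hℓ0 (y.ne_zero _) (x.ne_zero (j.castLE hrm)), hj₀, ← hw,
          hrepr]
    _ ≤ ℓ1 w := hy.apply_repr_smul_le w _

end IsSVD

/-- Theorem 4.11: given a singular value decomposition
`((y₁,…,yₙ), (x₁,…,xₘ))` of the boundary map of a two-term Floer-type complex, of rank `r`,
the generalized boundary depths satisfy `β_k(∂) = ℓ(y_k) - ℓ(x_k)` for `1 ≤ k ≤ r` and
`β_k(∂) = 0` for `k > r`; in particular they do not depend on the chosen decomposition. -/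
theorem gen_boundary_depth_eq_svd
    {Γ : AddSubgroup ℝ} {Λ : Type*} [Field Λ] (NS : NovikovStructure Γ Λ)
    {C1 C0 : Type*} [AddCommGroup C1] [Module Λ C1] [AddCommGroup C0] [Module Λ C0]
    {ℓ1 : C1 → EReal} {ℓ0 : C0 → EReal}
    (h1 : IsOrthogonalizable NS ℓ1) (h0 : IsOrthogonalizable NS ℓ0)
    (bd : C1 →ₗ[Λ] C0) (hbd : ∀ z : C1, ℓ0 (bd z) ≤ ℓ1 z)
    {r n m : ℕ} (hrn : r ≤ n) (hrm : r ≤ m)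
    (y : Module.Basis (Fin n) Λ C1) (x : Module.Basis (Fin m) Λ C0)
    (hsvd : IsSVD ℓ1 ℓ0 bd hrn hrm y x) :
    (∀ i : Fin r, genBoundaryDepth ℓ1 ℓ0 bd ((i : ℕ) + 1) =
      ℓ1 (y (Fin.castLE hrn i)) - ℓ0 (x (Fin.castLE hrm i))) ∧
    (∀ k : ℕ, r < k → genBoundaryDepth ℓ1 ℓ0 bd k = 0) := by
  have := Module.Finite.of_basis x
  refine ⟨fun i => genBoundaryDepth_eq_of_forall_iff (hsvd.gap_nonneg h1.1 h0.1 hbd i)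
      fun δ _ => ⟨fun ⟨_, hV, hrank, hrob⟩ =>
        hsvd.lt_gap_of_isRobustSubspace h1.1 h0.1 hV hrank hrob,
        hsvd.exists_isRobustSubspace_of_lt_gap h1.1 h0.1⟩,
    fun k hk => genBoundaryDepth_eq_of_forall_iff le_rfl fun δ hδ =>
      ⟨?_, fun hδ' => absurd hδ' (EReal.coe_nonneg.2 hδ).not_gt⟩⟩
  rintro ⟨V, hV, rfl, -⟩
  exact absurd ((Submodule.finrank_mono hV).trans hsvd.finrank_range_le) (by omega)
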